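/- arXiv:1705.03872 — 2 statements merged into one kernel-verified Lean document; each statement's English description precedes it below -/
import Mathlib

section
/- The first 𝒩 eigenvectors of the correlation operator solve the POD minimization problem: among all W-orthonormal families ψ_1,...,ψ_𝒩 in ℝ^N, the eigenvectors of R corresponding to the 𝒩 largest eigenvalues minimize Σ_{k∈K} ‖a^k − Σ_{i=1}^{𝒩} ⟨a^k, ψ_i⟩_W ψ_i‖_W². -/
/-!
With `R = A Aᵀ W`, the total residual of a `W`-orthonormal family `φ₁, …, φₙ` is
`∑ₖ ‖aᵏ‖²_W - ∑ⱼ ⟨φⱼ, R φⱼ⟩_W`, so it suffices to show that the eigenvectors maximise the trace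
`∑ⱼ ⟨φⱼ, R φⱼ⟩_W` (Ky Fan). Expanding each `φⱼ` in the eigenbasis `ψ` gives
`∑ⱼ ⟨φⱼ, R φⱼ⟩_W = ∑ᵢ λᵢ tᵢ` with `tᵢ = ∑ⱼ ⟨ψᵢ, φⱼ⟩²_W`; Bessel gives `tᵢ ≤ 1`, Parseval gives
`∑ᵢ tᵢ = n`, and for decreasing `λ` such a weighted sum is at most `λ₁ + ⋯ + λₙ`.
-/

open Matrix Finset

def OrthonormalWrt {n ι : Type*} [Fintype n] [DecidableEq ι] (W : Matrix n n ℝ) (φ : ι → n → ℝ) :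
    Prop :=
  ∀ i j, φ i ⬝ᵥ W *ᵥ φ j = if i = j then 1 else 0

section
variable {n ι κ : Type*} [Fintype n] {W : Matrix n n ℝ}

theorem Matrix.IsSymm.dotProduct_mulVec_comm (hW : W.IsSymm) (u v : n → ℝ) :
    u ⬝ᵥ W *ᵥ v = v ⬝ᵥ W *ᵥ u := by
  rw [dotProduct_mulVec, ← mulVec_transpose, hW.eq, dotProduct_comm]

theorem sum_smul_dotProduct_mulVec [Fintype ι] (c : ι → ℝ) (φ : ι → n → ℝ) (u : n → ℝ) :
    (∑ i, c i • φ i) ⬝ᵥ W *ᵥ u = ∑ i, c i * (φ i ⬝ᵥ W *ᵥ u) := by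
  simp [sum_dotProduct, smul_dotProduct]

theorem dotProduct_mulVec_sum_smul [Fintype ι] (c : ι → ℝ) (φ : ι → n → ℝ) (u : n → ℝ) :
    u ⬝ᵥ W *ᵥ (∑ i, c i • φ i) = ∑ i, c i * (u ⬝ᵥ W *ᵥ φ i) := by
  simp [mulVec_sum, dotProduct_sum, mulVec_smul, dotProduct_smul]

namespace OrthonormalWrt
variable [Fintype ι] [DecidableEq ι] {φ : ι → n → ℝ}

theorem dotProduct_mulVec_sum_smul_right (hφ : OrthonormalWrt W φ) (c : ι → ℝ) (j : ι) :
    φ j ⬝ᵥ W *ᵥ (∑ i, c i • φ i) = c j := by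
  simp [dotProduct_mulVec_sum_smul, hφ j]

theorem residual_eq (hW : W.IsSymm) (hφ : OrthonormalWrt W φ) (v : n → ℝ) :
    (v - ∑ i, (v ⬝ᵥ W *ᵥ φ i) • φ i) ⬝ᵥ W *ᵥ (v - ∑ i, (v ⬝ᵥ W *ᵥ φ i) • φ i)
      = v ⬝ᵥ W *ᵥ v - ∑ i, (v ⬝ᵥ W *ᵥ φ i) ^ 2 := by
  set p := ∑ i, (v ⬝ᵥ W *ᵥ φ i) • φ i
  have hpv : p ⬝ᵥ W *ᵥ v = ∑ i, (v ⬝ᵥ W *ᵥ φ i) ^ 2 := by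
    simp only [p, sum_smul_dotProduct_mulVec, hW.dotProduct_mulVec_comm (φ _) v, sq]
  have hpp : p ⬝ᵥ W *ᵥ p = ∑ i, (v ⬝ᵥ W *ᵥ φ i) ^ 2 := by
    simp only [p, sum_smul_dotProduct_mulVec, hφ.dotProduct_mulVec_sum_smul_right, sq]
  rw [sub_dotProduct, mulVec_sub, dotProduct_sub, dotProduct_sub, hpp, hpv,
    hW.dotProduct_mulVec_comm v p, hpv]
  ring

theorem sum_sq_le (hW : W.PosSemidef) (hφ : OrthonormalWrt W φ) (v : n → ℝ) :
    ∑ i, (v ⬝ᵥ W *ᵥ φ i) ^ 2 ≤ v ⬝ᵥ W *ᵥ v := by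
  have hres := hφ.residual_eq (isHermitian_iff_isSymm.mp hW.isHermitian) v
  have hnonneg := hW.dotProduct_mulVec_nonneg (v - ∑ i, (v ⬝ᵥ W *ᵥ φ i) • φ i)
  rw [star_trivial, hres] at hnonneg
  linarith

theorem sum_smul_eq_self [DecidableEq n] {ψ : n → n → ℝ} (hψ : OrthonormalWrt W ψ)
    (v : n → ℝ) : ∑ i, (ψ i ⬝ᵥ W *ᵥ v) • ψ i = v := by
  set Q : Matrix n n ℝ := of ψ
  have hQ : Q * W * Qᵀ = 1 := by
    ext i j
    rw [mul_apply', one_apply, ← hψ i j, dotProduct_mulVec]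
    rfl
  have hQ' : Qᵀ * (Q * W) = 1 := mul_eq_one_comm.mp hQ
  calc ∑ i, (ψ i ⬝ᵥ W *ᵥ v) • ψ i = Qᵀ *ᵥ ((Q * W) *ᵥ v) := by
        rw [mulVec_transpose, vecMul_eq_sum, ← mulVec_mulVec]; rfl
    _ = v := by rw [mulVec_mulVec, hQ', one_mulVec]

theorem sum_sq_eq [DecidableEq n] (hW : W.IsSymm) {ψ : n → n → ℝ} (hψ : OrthonormalWrt W ψ)
    (v : n → ℝ) : ∑ i, (v ⬝ᵥ W *ᵥ ψ i) ^ 2 = v ⬝ᵥ W *ᵥ v := by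
  have hres := hψ.residual_eq hW v
  simp only [hW.dotProduct_mulVec_comm v (ψ _)] at hres ⊢
  rw [hψ.sum_smul_eq_self, sub_self, zero_dotProduct] at hres
  linarith

theorem dotProduct_mulVec_eq_sum_eigenvalues [DecidableEq n] (hW : W.IsSymm)
    {ψ : n → n → ℝ} (hψ : OrthonormalWrt W ψ) {R : Matrix n n ℝ} {l : n → ℝ}
    (heig : ∀ i, R *ᵥ ψ i = l i • ψ i) (v : n → ℝ) :
    v ⬝ᵥ W *ᵥ (R *ᵥ v) = ∑ i, l i * (v ⬝ᵥ W *ᵥ ψ i) ^ 2 := by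
  have hRv : R *ᵥ v = ∑ i, (l i * (v ⬝ᵥ W *ᵥ ψ i)) • ψ i := by
    conv_lhs => rw [← hψ.sum_smul_eq_self v]
    simp only [mulVec_sum, mulVec_smul, heig, smul_smul, hW.dotProduct_mulVec_comm (ψ _) v,
      mul_comm]
  rw [hRv, dotProduct_mulVec_sum_smul]
  simp only [sq, mul_assoc]

end OrthonormalWrt

theorem sum_sq_dotProduct_mulVec_eq (hW : W.IsSymm) [Fintype κ] (A : Matrix n κ ℝ) (v : n → ℝ) :
    ∑ k, (Aᵀ k ⬝ᵥ W *ᵥ v) ^ 2 = v ⬝ᵥ W *ᵥ ((A * Aᵀ * W) *ᵥ v) := by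
  rw [← mulVec_mulVec, ← mulVec_mulVec, hW.dotProduct_mulVec_comm, dotProduct_comm _ (W *ᵥ v),
    dotProduct_mulVec, ← mulVec_transpose]
  simp only [dotProduct, sq]
  rfl

theorem OrthonormalWrt.sum_residual_eq [Fintype ι] [DecidableEq ι] [Fintype κ] (hW : W.IsSymm)
    {φ : ι → n → ℝ} (hφ : OrthonormalWrt W φ) (A : Matrix n κ ℝ) :
    ∑ k, (Aᵀ k - ∑ i, (Aᵀ k ⬝ᵥ W *ᵥ φ i) • φ i) ⬝ᵥ W *ᵥ (Aᵀ k - ∑ i, (Aᵀ k ⬝ᵥ W *ᵥ φ i) • φ i)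
      = ∑ k, Aᵀ k ⬝ᵥ W *ᵥ Aᵀ k - ∑ i, φ i ⬝ᵥ W *ᵥ ((A * Aᵀ * W) *ᵥ φ i) := by
  simp only [hφ.residual_eq hW, sum_sub_distrib, ← sum_sq_dotProduct_mulVec_eq hW]
  rw [sum_comm]

end

theorem sum_mul_le_sum_of_le_of_le {ι : Type*} [Fintype ι] (s : Finset ι) {l t : ι → ℝ} {c : ℝ}
    (hs : ∀ i ∈ s, c ≤ l i) (hsc : ∀ i ∉ s, l i ≤ c) (ht0 : ∀ i, 0 ≤ t i) (ht1 : ∀ i, t i ≤ 1)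
    (hsum : ∑ i, t i = #s) :
    ∑ i, l i * t i ≤ ∑ i ∈ s, l i := by
  classical
  have hgap : ∑ i ∈ s, l i - ∑ i, l i * t i
      = ∑ i ∈ s, (l i - c) * (1 - t i) + ∑ i ∈ sᶜ, (c - l i) * t i := by
    rw [← sum_add_sum_compl s t] at hsum
    rw [← sum_add_sum_compl s (fun i => l i * t i)]
    simp only [sub_mul, mul_sub, mul_one, sum_sub_distrib, ← mul_sum, sum_const, nsmul_eq_mul]
    linear_combination -c * hsum
  have hin : 0 ≤ ∑ i ∈ s, (l i - c) * (1 - t i) :=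
    sum_nonneg fun i hi => mul_nonneg (sub_nonneg.2 (hs i hi)) (sub_nonneg.2 (ht1 i))
  have hout : 0 ≤ ∑ i ∈ sᶜ, (c - l i) * t i :=
    sum_nonneg fun i hi => mul_nonneg (sub_nonneg.2 (hsc i (mem_compl.1 hi))) (ht0 i)
  linarith

theorem Antitone.sum_mul_le_sum_castLE {N m : ℕ} (h : m ≤ N) {l t : Fin N → ℝ} (hl : Antitone l)
    (ht0 : ∀ i, 0 ≤ t i) (ht1 : ∀ i, t i ≤ 1) (hsum : ∑ i, t i = m) :
    ∑ i, l i * t i ≤ ∑ j : Fin m, l (Fin.castLE h j) := by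
  set s := univ.map (Fin.castLEEmb h)
  have hmem : ∀ i, i ∈ s ↔ (i : ℕ) < m := fun i =>
    ⟨fun hi => by obtain ⟨j, -, rfl⟩ := mem_map.1 hi; exact j.2,
      fun hi => mem_map.2 ⟨⟨i, hi⟩, mem_univ _, rfl⟩⟩
  rw [show ∑ j : Fin m, l (Fin.castLE h j) = ∑ i ∈ s, l i by rw [sum_map]; rfl]
  have hcard : ∑ i, t i = #s := by rw [hsum, card_map, card_univ, Fintype.card_fin]
  rcases h.lt_or_eq with hlt | rfl
  · refine sum_mul_le_sum_of_le_of_le s (c := l ⟨m, hlt⟩) (fun i hi => hl ?_) (fun i hi => hl ?_)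
      ht0 ht1 hcard
    · exact Fin.mk_le_of_le_val ((hmem i).1 hi).le
    · exact Fin.le_def.2 (not_lt.1 (mt (hmem i).2 hi))
  · refine sum_mul_le_sum_of_le_of_le s (c := ⨅ i, l i)
      (fun i _ => ciInf_le (Finite.bddBelow_range l) i) (fun i hi => absurd ((hmem i).2 i.2) hi)
      ht0 ht1 hcard

theorem OrthonormalWrt.sum_dotProduct_mulVec_le_sum_eigenvalues {N m : ℕ}
    {W R : Matrix (Fin N) (Fin N) ℝ} (hW : W.PosSemidef) {l : Fin N → ℝ} (hl : Antitone l)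
    {ψ : Fin N → Fin N → ℝ} (hψ : OrthonormalWrt W ψ) (heig : ∀ i, R *ᵥ ψ i = l i • ψ i)
    (h : m ≤ N) {φ : Fin m → Fin N → ℝ} (hφ : OrthonormalWrt W φ) :
    ∑ j, φ j ⬝ᵥ W *ᵥ (R *ᵥ φ j) ≤ ∑ j : Fin m, l (Fin.castLE h j) := by
  have hWs : W.IsSymm := isHermitian_iff_isSymm.mp hW.isHermitian
  set t : Fin N → ℝ := fun i => ∑ j, (ψ i ⬝ᵥ W *ᵥ φ j) ^ 2
  have ht1 : ∀ i, t i ≤ 1 := fun i => by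
    simpa [hψ i i] using hφ.sum_sq_le hW (ψ i)
  have hsum : ∑ i, t i = m := by
    simp only [t, hWs.dotProduct_mulVec_comm (ψ _)]
    rw [sum_comm]
    simp [hψ.sum_sq_eq hWs, hφ _ _]
  calc ∑ j, φ j ⬝ᵥ W *ᵥ (R *ᵥ φ j)
      = ∑ i, l i * t i := by
        simp only [hψ.dotProduct_mulVec_eq_sum_eigenvalues hWs heig, t, mul_sum,
          hWs.dotProduct_mulVec_comm (ψ _)]
        exact sum_comm
    _ ≤ ∑ j : Fin m, l (Fin.castLE h j) :=
        hl.sum_mul_le_sum_castLE h (fun i => sum_nonneg fun j _ => sq_nonneg _) ht1 hsum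

theorem pod_optimality_general
    (N m n : ℕ) (W : Matrix (Fin N) (Fin N) ℝ) (hW : W.PosDef)
    (a : Fin m → Fin N → ℝ)
    (A : Matrix (Fin N) (Fin m) ℝ) (hA : A = Matrix.of fun i k => a k i)
    (lam : Fin N → ℝ) (psi : Fin N → Fin N → ℝ)
    (hdec : Antitone lam)
    (heig : ∀ i, (A * Aᵀ * W) *ᵥ psi i = lam i • psi i)
    (horth : ∀ i j, psi i ⬝ᵥ W *ᵥ psi j = if i = j then (1 : ℝ) else 0)
    (hnN : n ≤ N)
    (phi : Fin n → Fin N → ℝ)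
    (hphi : ∀ i j, phi i ⬝ᵥ W *ᵥ phi j = if i = j then (1 : ℝ) else 0) :
    ∑ k : Fin m,
      (fun e => e ⬝ᵥ W *ᵥ e)
        (a k - ∑ i : Fin n, (a k ⬝ᵥ W *ᵥ psi (Fin.castLE hnN i)) • psi (Fin.castLE hnN i))
    ≤ ∑ k : Fin m,
      (fun e => e ⬝ᵥ W *ᵥ e)
        (a k - ∑ i : Fin n, (a k ⬝ᵥ W *ᵥ phi i) • phi i) := by
  have hWs : W.IsSymm := isHermitian_iff_isSymm.mp hW.isHermitian
  obtain rfl : a = Aᵀ := by rw [hA]; rfl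
  have hψn : OrthonormalWrt W fun j : Fin n => psi (Fin.castLE hnN j) := fun i j => by
    simp [horth, Fin.castLE_inj]
  have hψR : ∀ j, psi j ⬝ᵥ W *ᵥ ((A * Aᵀ * W) *ᵥ psi j) = lam j := fun j => by
    rw [heig, mulVec_smul, dotProduct_smul, horth j j, if_pos rfl, smul_eq_mul, mul_one]
  beta_reduce
  rw [hψn.sum_residual_eq hWs, OrthonormalWrt.sum_residual_eq hWs hphi]
  simp only [hψR]
  exact sub_le_sub_left (OrthonormalWrt.sum_dotProduct_mulVec_le_sum_eigenvalues
    hW.posSemidef hdec horth heig hnN hphi) _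

/-- The first 𝒩 eigenvectors of the correlation operator (for the 𝒩 largest
eigenvalues) solve the POD minimization problem among all W-orthonormal families. -/
theorem pod_optimality
    (N m n : ℕ) (W : Matrix (Fin N) (Fin N) ℝ) (hW : W.PosDef)
    (a : Fin m → Fin N → ℝ)
    (A : Matrix (Fin N) (Fin m) ℝ) (hA : A = Matrix.of fun i k => a k i)
    (lam : Fin N → ℝ) (psi : Fin N → Fin N → ℝ)
    (hdec : Antitone lam)
    (heig : ∀ i, (A * Aᵀ * W) *ᵥ psi i = lam i • psi i)
    (horth : ∀ i j, psi i ⬝ᵥ W *ᵥ psi j = if i = j then (1 : ℝ) else 0)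
    (hnN : n ≤ N) (hn : n ≤ A.rank)
    (phi : Fin n → Fin N → ℝ)
    (hphi : ∀ i j, phi i ⬝ᵥ W *ᵥ phi j = if i = j then (1 : ℝ) else 0) :
    ∑ k : Fin m,
      (fun e => e ⬝ᵥ W *ᵥ e)
        (a k - ∑ i : Fin n, (a k ⬝ᵥ W *ᵥ psi (Fin.castLE hnN i)) • psi (Fin.castLE hnN i))
    ≤ ∑ k : Fin m,
      (fun e => e ⬝ᵥ W *ᵥ e)
        (a k - ∑ i : Fin n, (a k ⬝ᵥ W *ᵥ phi i) • phi i) :=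
  pod_optimality_general N m n W hW a A hA lam psi hdec heig horth hnN phi hphi
end

section
/- Relative a posteriori error bound: under the assumptions of the absolute error bound, and if additionally ‖r‖_{W^{-1}}/α ≤ ‖a^𝒩‖_W/2 (i.e., a^𝒩 is a sufficiently good approximation), then ‖a − a^𝒩‖_W / ‖a‖_W ≤ 2 ‖r‖_{W^{-1}} / (α ‖a^𝒩‖_W). -/
/-!
Factor `W = Bᵀ B` with `B` invertible. Then `‖v‖_W = |B v|` and `‖v‖_{W⁻¹} = |B⁻ᵀ v|` are
Euclidean norms, so Cauchy–Schwarz gives `eᵀ r ≤ ‖e‖_W ‖r‖_{W⁻¹}` and the triangle inequality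
gives `‖a^𝒩‖_W ≤ ‖a‖_W + ‖e‖_W` for the error `e = a - a^𝒩`. The generalized eigenvalues of
`(K, W)` are the eigenvalues of the symmetric matrix `B⁻ᵀ K B⁻¹`, whence the coercivity
`α ‖e‖_W² ≤ eᵀ K e = eᵀ r` and the absolute bound `‖e‖_W ≤ ‖r‖_{W⁻¹} / α ≤ ‖a^𝒩‖_W / 2`.
Thus `‖a‖_W ≥ ‖a^𝒩‖_W / 2`, and dividing the two bounds gives the relative one.
-/

open Matrix

open WithLp (toLp)

namespace Matrix

variable {m n : Type*} [Fintype m] [Fintype n]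

lemma dotProduct_transpose_mul_mulVec {R : Type*} [CommSemiring R] (B C : Matrix m n R)
    (x y : n → R) : x ⬝ᵥ (Bᵀ * C) *ᵥ y = (B *ᵥ x) ⬝ᵥ (C *ᵥ y) := by
  rw [← mulVec_mulVec, dotProduct_transpose_mulVec, dotProduct_comm]

lemma sqrt_dotProduct_transpose_mul_self_mulVec (B : Matrix m n ℝ) (x : n → ℝ) :
    √(x ⬝ᵥ (Bᵀ * B) *ᵥ x) = ‖toLp 2 (B *ᵥ x)‖ := by
  rw [dotProduct_transpose_mul_mulVec, ← Real.sqrt_sq (norm_nonneg _),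
    ← real_inner_self_eq_norm_sq, EuclideanSpace.inner_toLp_toLp, star_trivial]

open scoped MatrixOrder in
lemma PosSemidef.exists_eq_transpose_mul_self {W : Matrix n n ℝ} (hW : W.PosSemidef) :
    ∃ B : Matrix n n ℝ, W = Bᵀ * B := by
  classical
  simpa [star_eq_conjTranspose] using CStarAlgebra.nonneg_iff_eq_star_mul_self.mp hW.nonneg

open scoped MatrixOrder in
lemma PosDef.exists_isUnit_eq_transpose_mul_self [DecidableEq n] {W : Matrix n n ℝ}
    (hW : W.PosDef) : ∃ B : Matrix n n ℝ, IsUnit B ∧ W = Bᵀ * B := by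
  simpa [star_eq_conjTranspose] using
    CStarAlgebra.isStrictlyPositive_iff_eq_star_mul_self.mp hW.isStrictlyPositive

variable {W : Matrix n n ℝ}

lemma PosSemidef.sqrt_dotProduct_mulVec_sub_le (hW : W.PosSemidef) (x y : n → ℝ) :
    √((x - y) ⬝ᵥ W *ᵥ (x - y)) ≤ √(x ⬝ᵥ W *ᵥ x) + √(y ⬝ᵥ W *ᵥ y) := by
  obtain ⟨B, rfl⟩ := hW.exists_eq_transpose_mul_self
  simp only [sqrt_dotProduct_transpose_mul_self_mulVec]
  rw [mulVec_sub, WithLp.toLp_sub]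
  exact norm_sub_le _ _

lemma PosDef.dotProduct_le_sqrt_mul_sqrt_inv [DecidableEq n] (hW : W.PosDef) (x y : n → ℝ) :
    x ⬝ᵥ y ≤ √(x ⬝ᵥ W *ᵥ x) * √(y ⬝ᵥ W⁻¹ *ᵥ y) := by
  obtain ⟨B, hB, rfl⟩ := hW.exists_isUnit_eq_transpose_mul_self
  have hdet : IsUnit B.det := (isUnit_iff_isUnit_det B).mp hB
  have hinv : (Bᵀ * B)⁻¹ = B⁻¹ᵀᵀ * B⁻¹ᵀ := by
    rw [mul_inv_rev, transpose_transpose, transpose_nonsing_inv]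
  have hdot : x ⬝ᵥ y = (B *ᵥ x) ⬝ᵥ (B⁻¹ᵀ *ᵥ y) := by
    rw [← dotProduct_transpose_mul_mulVec, ← transpose_mul, nonsing_inv_mul _ hdet,
      transpose_one, one_mulVec]
  rw [hinv, sqrt_dotProduct_transpose_mul_self_mulVec, sqrt_dotProduct_transpose_mul_self_mulVec]
  calc x ⬝ᵥ y = inner ℝ (toLp 2 (B *ᵥ x)) (toLp 2 (B⁻¹ᵀ *ᵥ y)) := by
        rw [EuclideanSpace.inner_toLp_toLp, star_trivial, hdot, dotProduct_comm]
    _ ≤ _ := real_inner_le_norm _ _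

lemma IsHermitian.mul_dotProduct_self_le_dotProduct_mulVec {M : Matrix n n ℝ}
    (hM : M.IsHermitian) {α : ℝ} (hα : ∀ (μ : ℝ) (u : n → ℝ), u ≠ 0 → M *ᵥ u = μ • u → α ≤ μ)
    (u : n → ℝ) : α * (u ⬝ᵥ u) ≤ u ⬝ᵥ M *ᵥ u := by
  classical
  have hM' : (M - α • 1).IsHermitian := hM.sub (isHermitian_one.smul (IsSelfAdjoint.all α))
  have hpsd : (M - α • 1).PosSemidef := by
    refine hM'.posSemidef_iff_eigenvalues_nonneg.mpr fun i => ?_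
    change (0 : ℝ) ≤ _
    have hne : ⇑(hM'.eigenvectorBasis i) ≠ 0 := by
      simpa using hM'.eigenvectorBasis.orthonormal.ne_zero i
    have heig := hM'.mulVec_eigenvectorBasis i
    rw [sub_mulVec, smul_mulVec, one_mulVec, sub_eq_iff_eq_add, ← add_smul] at heig
    linarith [hα _ _ hne heig]
  have := hpsd.dotProduct_mulVec_nonneg u
  rw [star_trivial, sub_mulVec, dotProduct_sub, smul_mulVec, one_mulVec, dotProduct_smul,
    smul_eq_mul] at this
  linarith

lemma PosDef.mul_dotProduct_mulVec_le_of_forall_generalized_eigenvalue (hW : W.PosDef)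
    {K : Matrix n n ℝ} (hK : K.IsHermitian) {α : ℝ}
    (hα : ∀ (μ : ℝ) (v : n → ℝ), v ≠ 0 → K *ᵥ v = μ • (W *ᵥ v) → α ≤ μ) (x : n → ℝ) :
    α * (x ⬝ᵥ W *ᵥ x) ≤ x ⬝ᵥ K *ᵥ x := by
  classical
  obtain ⟨B, hB, rfl⟩ := hW.exists_isUnit_eq_transpose_mul_self
  have hdet : IsUnit B.det := (isUnit_iff_isUnit_det B).mp hB
  set M := B⁻¹ᵀ * K * B⁻¹
  have hM : M.IsHermitian := by
    simpa [M, conjTranspose_eq_transpose_of_trivial] using isHermitian_conjTranspose_mul_mul B⁻¹ hK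
  have hK_eq : K = Bᵀ * M * B := by
    have hBB : Bᵀ * B⁻¹ᵀ = 1 := by rw [← transpose_mul, nonsing_inv_mul _ hdet, transpose_one]
    simp only [M, ← mul_assoc, hBB, one_mul]
    rw [mul_assoc, nonsing_inv_mul _ hdet, mul_one]
  have hMα : ∀ (μ : ℝ) (u : n → ℝ), u ≠ 0 → M *ᵥ u = μ • u → α ≤ μ := by
    intro μ u hu hMu
    have hBu : B *ᵥ (B⁻¹ *ᵥ u) = u := by rw [mulVec_mulVec, mul_nonsing_inv _ hdet, one_mulVec]
    refine hα μ (B⁻¹ *ᵥ u) (fun h => hu ?_) ?_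
    · rw [← hBu, h, mulVec_zero]
    · rw [hK_eq]
      simp only [← mulVec_mulVec, hBu, hMu, mulVec_smul]
  calc α * (x ⬝ᵥ (Bᵀ * B) *ᵥ x) = α * ((B *ᵥ x) ⬝ᵥ (B *ᵥ x)) := by
        rw [dotProduct_transpose_mul_mulVec]
    _ ≤ (B *ᵥ x) ⬝ᵥ M *ᵥ (B *ᵥ x) := hM.mul_dotProduct_self_le_dotProduct_mulVec hMα _
    _ = x ⬝ᵥ K *ᵥ x := by
        rw [hK_eq, mul_assoc, dotProduct_transpose_mul_mulVec, mulVec_mulVec]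

lemma PosDef.mul_sqrt_dotProduct_mulVec_le [DecidableEq n] (hW : W.PosDef) {K : Matrix n n ℝ}
    (hK : K.IsHermitian) {α : ℝ}
    (hα : ∀ (μ : ℝ) (v : n → ℝ), v ≠ 0 → K *ᵥ v = μ • (W *ᵥ v) → α ≤ μ) (e : n → ℝ) :
    α * √(e ⬝ᵥ W *ᵥ e) ≤ √((K *ᵥ e) ⬝ᵥ W⁻¹ *ᵥ (K *ᵥ e)) := by
  set E := √(e ⬝ᵥ W *ᵥ e)
  have hE : E ^ 2 = e ⬝ᵥ W *ᵥ e :=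
    Real.sq_sqrt (by simpa using hW.posSemidef.dotProduct_mulVec_nonneg e)
  have key : α * E ^ 2 ≤ E * √((K *ᵥ e) ⬝ᵥ W⁻¹ *ᵥ (K *ᵥ e)) :=
    calc α * E ^ 2 = α * (e ⬝ᵥ W *ᵥ e) := by rw [hE]
      _ ≤ e ⬝ᵥ K *ᵥ e := hW.mul_dotProduct_mulVec_le_of_forall_generalized_eigenvalue hK hα e
      _ ≤ _ := hW.dotProduct_le_sqrt_mul_sqrt_inv e (K *ᵥ e)
  rcases (show 0 ≤ E from Real.sqrt_nonneg _).eq_or_lt with hE0 | hEpos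
  · rw [← hE0, mul_zero]
    exact Real.sqrt_nonneg _
  · exact le_of_mul_le_mul_right (by linarith) hEpos

end Matrix

lemma div_le_two_mul_div_of_le_half {E A B ε : ℝ} (hE : 0 ≤ E) (hEε : E ≤ ε) (hεB : ε ≤ B / 2)
    (hBA : B ≤ A + E) : E / A ≤ 2 * ε / B := by
  rcases (show 0 ≤ B by linarith).eq_or_lt with hB0 | hBpos
  · -- both sides vanish, the right one through `x / 0 = 0`
    obtain rfl : E = 0 := by linarith
    simp [← hB0]
  · calc E / A ≤ ε / (B / 2) := div_le_div₀ (hE.trans hEε) hEε (by positivity) (by linarith)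
      _ = 2 * ε / B := by ring

theorem relative_a_posteriori_error_bound_general
    (N : ℕ) (W K : Matrix (Fin N) (Fin N) ℝ) (hW : W.PosDef) (hK : K.PosDef)
    (a aN f : Fin N → ℝ) (ha : K *ᵥ a = f)
    (r : Fin N → ℝ) (hr : r = f - K *ᵥ aN)
    (α : ℝ) (hα : 0 < α)
    (hmin : ∀ (μ : ℝ) (v : Fin N → ℝ), v ≠ 0 → K *ᵥ v = μ • (W *ᵥ v) → α ≤ μ)
    (hclose : Real.sqrt (r ⬝ᵥ W⁻¹ *ᵥ r) / α ≤ Real.sqrt (aN ⬝ᵥ W *ᵥ aN) / 2) :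
    Real.sqrt ((a - aN) ⬝ᵥ W *ᵥ (a - aN)) / Real.sqrt (a ⬝ᵥ W *ᵥ a)
      ≤ 2 * Real.sqrt (r ⬝ᵥ W⁻¹ *ᵥ r) / (α * Real.sqrt (aN ⬝ᵥ W *ᵥ aN)) := by
  have hKe : K *ᵥ (a - aN) = r := by rw [mulVec_sub, ha, hr]
  have habs : √((a - aN) ⬝ᵥ W *ᵥ (a - aN)) ≤ √(r ⬝ᵥ W⁻¹ *ᵥ r) / α := by
    rw [le_div_iff₀' hα, ← hKe]
    exact hW.mul_sqrt_dotProduct_mulVec_le hK.isHermitian hmin _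
  have htri : √(aN ⬝ᵥ W *ᵥ aN) ≤ √(a ⬝ᵥ W *ᵥ a) + √((a - aN) ⬝ᵥ W *ᵥ (a - aN)) := by
    simpa using hW.posSemidef.sqrt_dotProduct_mulVec_sub_le a (a - aN)
  calc _ ≤ 2 * (√(r ⬝ᵥ W⁻¹ *ᵥ r) / α) / √(aN ⬝ᵥ W *ᵥ aN) :=
        div_le_two_mul_div_of_le_half (Real.sqrt_nonneg _) habs hclose htri
    _ = _ := by ring

/-- Relative a posteriori error bound
‖a − a^𝒩‖_W / ‖a‖_W ≤ 2 ‖r‖_{W⁻¹} / (α ‖a^𝒩‖_W), provided ‖r‖_{W⁻¹}/α ≤ ‖a^𝒩‖_W/2. -/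
theorem relative_a_posteriori_error_bound
    (N : ℕ) (W K : Matrix (Fin N) (Fin N) ℝ) (hW : W.PosDef) (hK : K.PosDef)
    (a aN f : Fin N → ℝ) (ha : K *ᵥ a = f) (haN : aN ≠ 0)
    (r : Fin N → ℝ) (hr : r = f - K *ᵥ aN)
    (α : ℝ) (hα : 0 < α)
    (hmem : ∃ v : Fin N → ℝ, v ≠ 0 ∧ K *ᵥ v = α • (W *ᵥ v))
    (hmin : ∀ (μ : ℝ) (v : Fin N → ℝ), v ≠ 0 → K *ᵥ v = μ • (W *ᵥ v) → α ≤ μ)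
    (hclose : Real.sqrt (r ⬝ᵥ W⁻¹ *ᵥ r) / α ≤ Real.sqrt (aN ⬝ᵥ W *ᵥ aN) / 2) :
    Real.sqrt ((a - aN) ⬝ᵥ W *ᵥ (a - aN)) / Real.sqrt (a ⬝ᵥ W *ᵥ a)
      ≤ 2 * Real.sqrt (r ⬝ᵥ W⁻¹ *ᵥ r) / (α * Real.sqrt (aN ⬝ᵥ W *ᵥ aN)) :=
  relative_a_posteriori_error_bound_general N W K hW hK a aN f ha r hr α hα hmin hclose
end
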